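/- Let q ≥ 2 and d ≥ 1 be integers, and let x, y, s be integers with x, y, x + s, y + s all in {0,…,q^d−1}. Suppose that for every 0 ≤ i < d we have q/2 ≤ (x+s)_i + y_i < 3q/2 and q/2 ≤ x_i + (y+s)_i < 3q/2, where subscripts denote base-q digits. Then (x+s)_i + y_i = x_i + (y+s)_i for every 0 ≤ i < d; equivalently, π(x + s) + π(y) = π(x) + π(y + s) as vectors in ℤ^d. -/

import Mathlib

/-!
Put `u i = ((x+s)_i + y_i) - (x_i + (y+s)_i)`. Both digit sums lie in `[q/2, 3q/2)`, so
`|u i| < q`, while `∑ u i q^i = (x + s) + y - x - (y + s) = 0`. A base-`q` expansion of `0`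
whose digits have absolute value `< q` is trivial: reducing mod `q` kills `u 0`, then divide by `q`.
-/

/-- The `i`-th digit of the base-`q` expansion of a (nonnegative) integer `n`. -/
def zdigit (q : ℕ) (n : ℤ) (i : ℕ) : ℤ := n / (q : ℤ) ^ i % (q : ℤ)

open Finset

theorem Int.emod_mul_of_nonneg (n : ℤ) {a : ℤ} (b : ℤ) (ha : 0 ≤ a) :
    n % (a * b) = n % a + a * (n / a % b) := by
  rw [Int.emod_def, Int.emod_def, Int.emod_def, ← Int.ediv_ediv_of_nonneg ha]
  ring

theorem sum_zdigit_mul_pow (q : ℕ) (n : ℤ) (d : ℕ) :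
    ∑ i ∈ range d, zdigit q n i * (q : ℤ) ^ i = n % (q : ℤ) ^ d := by
  induction d with
  | zero => simp
  | succ d ih =>
    rw [sum_range_succ, ih, pow_succ, Int.emod_mul_of_nonneg n _ (by positivity), zdigit,
      mul_comm ((q : ℤ) ^ d)]

theorem sum_zdigit_mul_pow_of_lt (q : ℕ) {n : ℤ} {d : ℕ} (hn : 0 ≤ n ∧ n < (q : ℤ) ^ d) :
    ∑ i ∈ range d, zdigit q n i * (q : ℤ) ^ i = n := by
  rw [sum_zdigit_mul_pow, Int.emod_eq_of_lt hn.1 hn.2]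

theorem eq_zero_of_sum_mul_pow_eq_zero {q : ℤ} {d : ℕ} {u : ℕ → ℤ} (hu : ∀ i < d, |u i| < q)
    (hsum : ∑ i ∈ range d, u i * q ^ i = 0) : ∀ i < d, u i = 0 := by
  induction d generalizing u with
  | zero => simp
  | succ d ih =>
    rw [sum_range_succ'] at hsum
    have hsplit : ∑ i ∈ range d, u (i + 1) * q ^ (i + 1) =
        q * ∑ i ∈ range d, u (i + 1) * q ^ i := by
      rw [mul_sum]; exact sum_congr rfl fun i _ => by ring
    rw [hsplit, pow_zero, mul_one] at hsum
    have hu0 : u 0 = 0 :=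
      Int.eq_zero_of_abs_lt_dvd ⟨-∑ i ∈ range d, u (i + 1) * q ^ i, by linarith⟩
        (hu 0 d.succ_pos)
    have hq : q ≠ 0 := (lt_of_le_of_lt (abs_nonneg _) (hu 0 d.succ_pos)).ne'
    rw [hu0, add_zero, mul_eq_zero] at hsum
    have htail := ih (u := fun i => u (i + 1)) (fun i hi => hu (i + 1) (by omega))
      (hsum.resolve_left hq)
    rintro (_ | i) hi
    · exact hu0
    · exact htail i (by omega)

theorem digit_sum_eq_general (q d : ℕ) (x y s : ℤ)
    (hx : 0 ≤ x ∧ x < (q : ℤ) ^ d) (hy : 0 ≤ y ∧ y < (q : ℤ) ^ d)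
    (hxs : 0 ≤ x + s ∧ x + s < (q : ℤ) ^ d) (hys : 0 ≤ y + s ∧ y + s < (q : ℤ) ^ d)
    (h₁ : ∀ i < d, (q : ℚ) / 2 ≤ ((zdigit q (x + s) i + zdigit q y i : ℤ) : ℚ) ∧
      ((zdigit q (x + s) i + zdigit q y i : ℤ) : ℚ) < 3 * q / 2)
    (h₂ : ∀ i < d, (q : ℚ) / 2 ≤ ((zdigit q x i + zdigit q (y + s) i : ℤ) : ℚ) ∧
      ((zdigit q x i + zdigit q (y + s) i : ℤ) : ℚ) < 3 * q / 2) :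
    ∀ i < d, zdigit q (x + s) i + zdigit q y i = zdigit q x i + zdigit q (y + s) i := by
  set u : ℕ → ℤ := fun i =>
    (zdigit q (x + s) i + zdigit q y i) - (zdigit q x i + zdigit q (y + s) i)
  have hu : ∀ i < d, |u i| < q := fun i hi => by
    obtain ⟨ha₁, ha₂⟩ := h₁ i hi
    obtain ⟨hb₁, hb₂⟩ := h₂ i hi
    have : |((u i : ℤ) : ℚ)| < q := by
      push_cast [u] at ha₁ ha₂ hb₁ hb₂ ⊢
      rw [abs_sub_lt_iff]; constructor <;> linarith
    exact_mod_cast this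
  have hsum : ∑ i ∈ range d, u i * (q : ℤ) ^ i = 0 := by
    simp only [u, sub_mul, add_mul, sum_sub_distrib, sum_add_distrib,
      sum_zdigit_mul_pow_of_lt q hx, sum_zdigit_mul_pow_of_lt q hy,
      sum_zdigit_mul_pow_of_lt q hxs, sum_zdigit_mul_pow_of_lt q hys]
    ring
  intro i hi
  exact sub_eq_zero.mp (eq_zero_of_sum_mul_pow_eq_zero hu hsum i hi)

/-- If `x, y, x + s, y + s ∈ {0,…,q^d−1}` and for every `0 ≤ i < d` we have
`q/2 ≤ (x+s)_i + y_i < 3q/2` and `q/2 ≤ x_i + (y+s)_i < 3q/2` (subscripts denoting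
base-`q` digits), then `(x+s)_i + y_i = x_i + (y+s)_i` for every `0 ≤ i < d`. -/
theorem digit_sum_eq (q d : ℕ) (hq : 2 ≤ q) (hd : 1 ≤ d) (x y s : ℤ)
    (hx : 0 ≤ x ∧ x < (q : ℤ) ^ d) (hy : 0 ≤ y ∧ y < (q : ℤ) ^ d)
    (hxs : 0 ≤ x + s ∧ x + s < (q : ℤ) ^ d) (hys : 0 ≤ y + s ∧ y + s < (q : ℤ) ^ d)
    (h₁ : ∀ i < d, (q : ℚ) / 2 ≤ ((zdigit q (x + s) i + zdigit q y i : ℤ) : ℚ) ∧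
      ((zdigit q (x + s) i + zdigit q y i : ℤ) : ℚ) < 3 * q / 2)
    (h₂ : ∀ i < d, (q : ℚ) / 2 ≤ ((zdigit q x i + zdigit q (y + s) i : ℤ) : ℚ) ∧
      ((zdigit q x i + zdigit q (y + s) i : ℤ) : ℚ) < 3 * q / 2) :
    ∀ i < d, zdigit q (x + s) i + zdigit q y i = zdigit q x i + zdigit q (y + s) i :=
  digit_sum_eq_general q d x y s hx hy hxs hys h₁ h₂
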